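/- arXiv:1301.3488 — 11 statements merged into one kernel-verified Lean document; each statement's English description precedes it below -/
import Mathlib

section
/- The number of maximal locations of s is at most nσ, i.e., |L| ≤ nσ. -/
/-- The fingerprint `C_s(i,j)`: the set of distinct letters occurring in `s_i … s_j`. -/
def fingerprint {α : Type*} [DecidableEq α] (s : ℕ → α) (i j : ℕ) : Finset α :=
  (Finset.Icc i j).image s

/-- `⟨i,j⟩` is a maximal location of the sequence `s_1 … s_n`. -/
def IsMaxLoc {α : Type*} [DecidableEq α] (s : ℕ → α) (n i j : ℕ) : Prop :=
  1 ≤ i ∧ i ≤ j ∧ j ≤ n ∧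
    (1 < i → s (i - 1) ∉ fingerprint s i j) ∧
    (j < n → s (j + 1) ∉ fingerprint s i j)

lemma fingerprint_mono {α : Type*} [DecidableEq α] (s : ℕ → α) {i j j' : ℕ}
    (h : j ≤ j') : fingerprint s i j ⊆ fingerprint s i j' :=
  Finset.image_subset_image (Finset.Icc_subset_Icc_right h)

lemma mem_fingerprint {α : Type*} [DecidableEq α] (s : ℕ → α) {i j k : ℕ}
    (h1 : i ≤ k) (h2 : k ≤ j) : s k ∈ fingerprint s i j :=
  Finset.mem_image_of_mem s (Finset.mem_Icc.mpr ⟨h1, h2⟩)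

lemma card_lt_of_maxLoc {α : Type*} [DecidableEq α] {s : ℕ → α} {n i j j' : ℕ}
    (hj : IsMaxLoc s n i j) (hj' : IsMaxLoc s n i j') (h : j < j') :
    (fingerprint s i j).card < (fingerprint s i j').card := by
  have hsub : fingerprint s i j ⊆ fingerprint s i j' := fingerprint_mono s h.le
  have hnew : s (j + 1) ∈ fingerprint s i j' :=
    mem_fingerprint s (le_trans hj.2.1 (Nat.le_succ j)) h
  have hnot : s (j + 1) ∉ fingerprint s i j := hj.2.2.2.2 (lt_of_lt_of_le h hj'.2.2.1)
  exact Finset.card_lt_card ⟨hsub, fun hsub' => hnot (hsub' hnew)⟩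

/-- The number of maximal locations of `s = s_1 … s_n` is at most `n * σ`. -/
theorem card_maxLocs_le {α : Type*} [DecidableEq α] [Fintype α]
    (s : ℕ → α) (n : ℕ) :
    {p : ℕ × ℕ | IsMaxLoc s n p.1 p.2}.ncard ≤ n * Fintype.card α := by
  set S := {p : ℕ × ℕ | IsMaxLoc s n p.1 p.2} with hS
  set T : Finset (ℕ × ℕ) := Finset.Icc 1 n ×ˢ Finset.Icc 1 (Fintype.card α) with hT
  set f : ℕ × ℕ → ℕ × ℕ := fun p => (p.1, (fingerprint s p.1 p.2).card) with hf
  have hmaps : ∀ p ∈ S, f p ∈ (T : Set (ℕ × ℕ)) := by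
    rintro ⟨i, j⟩ hp
    obtain ⟨h1, hij, hjn, -, -⟩ := hp
    simp only [hT, hf, Finset.coe_product, Set.mem_prod, Finset.mem_coe,
      Finset.mem_Icc]
    refine ⟨⟨h1, le_trans hij hjn⟩, ?_, Finset.card_le_univ _⟩
    have : s i ∈ fingerprint s i j := mem_fingerprint s le_rfl hij
    exact Finset.card_pos.mpr ⟨s i, this⟩
  have hinj : Set.InjOn f S := by
    rintro ⟨i, j⟩ hp ⟨i', j'⟩ hq heq
    simp only [hf, Prod.mk.injEq] at heq
    obtain ⟨h1, h2⟩ := heq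
    subst h1
    rcases lt_trichotomy j j' with h | h | h
    · exact absurd h2 (card_lt_of_maxLoc hp hq h).ne
    · rw [h]
    · exact absurd h2.symm (card_lt_of_maxLoc hq hp h).ne
  calc S.ncard ≤ (T : Set (ℕ × ℕ)).ncard :=
        Set.ncard_le_ncard_of_injOn f hmaps hinj T.finite_toSet
    _ = T.card := Set.ncard_coe_finset T
    _ = n * Fintype.card α := by
        simp [hT, Nat.card_Icc]
end

section
/- For all 1 ≤ i ≤ j ≤ n there exist positions k and l with 1 ≤ k ≤ i and j ≤ l ≤ n such that ⟨k,l⟩ is a maximal location of s and C_s(k,l) = C_s(i,j). (In other words, every interval can be extended to a maximal location with the same fingerprint, so Extend_s(i,j) is well defined.) -/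
lemma fp_left {α : Type*} [DecidableEq α] (s : ℕ → α) {i j : ℕ}
    (hi : 1 ≤ i) (hij : i ≤ j) (h : s (i - 1) ∈ fingerprint s i j) :
    fingerprint s (i - 1) j = fingerprint s i j := by
  have : Finset.Icc (i - 1) j = insert (i - 1) (Finset.Icc i j) := by
    ext x; simp [Finset.mem_Icc]; omega
  unfold fingerprint
  rw [this, Finset.image_insert]
  exact Finset.insert_eq_self.mpr h

lemma fp_right {α : Type*} [DecidableEq α] (s : ℕ → α) {i j : ℕ}
    (hij : i ≤ j) (h : s (j + 1) ∈ fingerprint s i j) :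
    fingerprint s i (j + 1) = fingerprint s i j := by
  have : Finset.Icc i (j + 1) = insert (j + 1) (Finset.Icc i j) := by
    ext x; simp [Finset.mem_Icc]; omega
  unfold fingerprint
  rw [this, Finset.image_insert]
  exact Finset.insert_eq_self.mpr h

lemma exists_extend_aux {α : Type*} [DecidableEq α] (s : ℕ → α) (n : ℕ) :
    ∀ m i j, 1 ≤ i → i ≤ j → j ≤ n → (i - 1) + (n - j) ≤ m →
    ∃ k l, 1 ≤ k ∧ k ≤ i ∧ j ≤ l ∧ l ≤ n ∧ IsMaxLoc s n k l ∧
      fingerprint s k l = fingerprint s i j := by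
  intro m
  induction m with
  | zero =>
    intro i j h1 hij hjn hm
    have hi : i = 1 := by omega
    have hj : j = n := by omega
    exact ⟨i, j, h1, le_refl i, le_refl j, hjn,
      ⟨h1, hij, hjn, by omega, by omega⟩, rfl⟩
  | succ m ih =>
    intro i j h1 hij hjn hm
    by_cases hL : 1 < i ∧ s (i - 1) ∈ fingerprint s i j
    · obtain ⟨k, l, hk1, hki, hjl, hln, hmax, hfp⟩ :=
        ih (i - 1) j (by omega) (by omega) hjn (by omega)
      exact ⟨k, l, hk1, by omega, hjl, hln, hmax,
        hfp.trans (fp_left s h1 hij hL.2)⟩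
    · by_cases hR : j < n ∧ s (j + 1) ∈ fingerprint s i j
      · obtain ⟨k, l, hk1, hki, hjl, hln, hmax, hfp⟩ :=
          ih i (j + 1) h1 (by omega) (by omega) (by omega)
        exact ⟨k, l, hk1, hki, by omega, hln, hmax,
          hfp.trans (fp_right s hij hR.2)⟩
      · refine ⟨i, j, h1, le_refl i, le_refl j, hjn,
          ⟨h1, hij, hjn, ?_, ?_⟩, rfl⟩
        · intro hi hmem; exact hL ⟨hi, hmem⟩
        · intro hj hmem; exact hR ⟨hj, hmem⟩

/-- Every interval `[i,j]` can be extended to a maximal location `⟨k,l⟩` with the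
same fingerprint (so `Extend_s(i,j)` is well defined). -/
theorem exists_extend_maxLoc {α : Type*} [DecidableEq α]
    (s : ℕ → α) (n i j : ℕ) (h1 : 1 ≤ i) (hij : i ≤ j) (hjn : j ≤ n) :
    ∃ k l, 1 ≤ k ∧ k ≤ i ∧ j ≤ l ∧ l ≤ n ∧ IsMaxLoc s n k l ∧
      fingerprint s k l = fingerprint s i j := by
  exact exists_extend_aux s n ((i - 1) + (n - j)) i j h1 hij hjn le_rfl
end

section
/- Every fingerprint of s is the fingerprint of some maximal location: for every f ∈ F there exists ⟨k,l⟩ ∈ L with C_s(k,l) = f. Consequently |F| ≤ |L|. -/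
/-- The set `F` of all fingerprints of substrings of `s_1 … s_n`. -/
def Fings {α : Type*} [DecidableEq α] (s : ℕ → α) (n : ℕ) : Set (Finset α) :=
  {f | ∃ i j, 1 ≤ i ∧ i ≤ j ∧ j ≤ n ∧ fingerprint s i j = f}

/-!
Extending an interval by a letter it already contains does not change its fingerprint. So,
starting from any interval `[i,j]`, push the right end as far as possible (up to `n`) and then the
left end as far as possible (down to `1`) while keeping the fingerprint: the result is a maximal
location with the same fingerprint. Hence `F` lies in the image of the finite set `L` under
`⟨k,l⟩ ↦ C_s(k,l)`.
-/

section Fingerprint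

variable {α : Type*} [DecidableEq α] (s : ℕ → α)

theorem fingerprint_succ_right_of_mem {i j : ℕ} (h : s (j + 1) ∈ fingerprint s i j) :
    fingerprint s i (j + 1) = fingerprint s i j := by
  obtain ⟨m, hm, -⟩ := Finset.mem_image.mp h
  have hij : i ≤ j + 1 := by grind
  rw [fingerprint, ← Finset.insert_Icc_right_eq_Icc_add_one hij, Finset.image_insert]
  exact Finset.insert_eq_self.mpr h

theorem fingerprint_pred_left_of_mem {i j : ℕ} (h : s (i - 1) ∈ fingerprint s i j) :
    fingerprint s (i - 1) j = fingerprint s i j := by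
  obtain ⟨m, hm, -⟩ := Finset.mem_image.mp h
  cases i with
  | zero => rfl
  | succ i =>
    rw [Nat.add_sub_cancel] at h ⊢
    have hij : i ≤ j := by grind
    rw [fingerprint, ← Finset.insert_Icc_add_one_left_eq_Icc hij, Finset.image_insert]
    exact Finset.insert_eq_self.mpr h

theorem exists_right_extension {n i j : ℕ} (hjn : j ≤ n) :
    ∃ l, j ≤ l ∧ l ≤ n ∧ fingerprint s i l = fingerprint s i j ∧
      (l < n → s (l + 1) ∉ fingerprint s i l) := by
  let P l := j ≤ l ∧ fingerprint s i l = fingerprint s i j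
  obtain ⟨hjl, hfl⟩ : P (Nat.findGreatest P n) := Nat.findGreatest_spec hjn ⟨le_rfl, rfl⟩
  refine ⟨_, hjl, Nat.findGreatest_le n, hfl, fun hln hmem => ?_⟩
  have hP : P (Nat.findGreatest P n + 1) :=
    ⟨by omega, (fingerprint_succ_right_of_mem s hmem).trans hfl⟩
  exact absurd (Nat.le_findGreatest hln hP) (by omega)

theorem exists_left_extension {i j : ℕ} (hi : 1 ≤ i) :
    ∃ k, 1 ≤ k ∧ k ≤ i ∧ fingerprint s k j = fingerprint s i j ∧
      (1 < k → s (k - 1) ∉ fingerprint s k j) := by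
  let P k := 1 ≤ k ∧ fingerprint s k j = fingerprint s i j
  have hex : ∃ k, P k := ⟨i, hi, rfl⟩
  obtain ⟨hk, hfk⟩ : P (Nat.find hex) := Nat.find_spec hex
  refine ⟨_, hk, Nat.find_min' hex ⟨hi, rfl⟩, hfk, fun hk1 hmem => ?_⟩
  have hP : P (Nat.find hex - 1) :=
    ⟨by omega, (fingerprint_pred_left_of_mem s hmem).trans hfk⟩
  exact absurd (Nat.find_min' hex hP) (by omega)

theorem exists_isMaxLoc_fingerprint_eq {n i j : ℕ} (hi : 1 ≤ i) (hij : i ≤ j) (hjn : j ≤ n) :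
    ∃ k l, IsMaxLoc s n k l ∧ fingerprint s k l = fingerprint s i j := by
  obtain ⟨l, hjl, hln, hfl, hright⟩ := exists_right_extension s (i := i) hjn
  obtain ⟨k, hk, hki, hfk, hleft⟩ := exists_left_extension s (j := l) hi
  refine ⟨k, l, ⟨hk, by omega, hln, hleft, ?_⟩, hfk.trans hfl⟩
  rw [hfk]
  exact hright

theorem finite_setOf_isMaxLoc (n : ℕ) : {p : ℕ × ℕ | IsMaxLoc s n p.1 p.2}.Finite :=
  (Set.finite_Icc (1, 1) (n, n)).subset fun _ ⟨hi, hij, hjn, _⟩ => ⟨⟨hi, by omega⟩, ⟨by omega, hjn⟩⟩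

end Fingerprint

/-- Every fingerprint of `s` is the fingerprint of some maximal location;
consequently `|F| ≤ |L|`. -/
theorem fingerprint_eq_maxLoc_fingerprint {α : Type*} [DecidableEq α]
    (s : ℕ → α) (n : ℕ) :
    (∀ f ∈ Fings s n, ∃ k l, IsMaxLoc s n k l ∧ fingerprint s k l = f) ∧
      (Fings s n).ncard ≤ {p : ℕ × ℕ | IsMaxLoc s n p.1 p.2}.ncard := by
  set L := {p : ℕ × ℕ | IsMaxLoc s n p.1 p.2}
  have hF : Fings s n ⊆ (fun p => fingerprint s p.1 p.2) '' L := by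
    rintro _ ⟨i, j, hi, hij, hjn, rfl⟩
    obtain ⟨k, l, hkl, hf⟩ := exists_isMaxLoc_fingerprint_eq s hi hij hjn
    exact ⟨(k, l), hkl, hf⟩
  refine ⟨fun f hf => ?_, ?_⟩
  · obtain ⟨⟨k, l⟩, hkl, rfl⟩ := hF hf
    exact ⟨k, l, hkl, rfl⟩
  · have hL := finite_setOf_isMaxLoc s n
    calc (Fings s n).ncard ≤ ((fun p => fingerprint s p.1 p.2) '' L).ncard :=
          Set.ncard_le_ncard hF (hL.image _)
      _ ≤ L.ncard := Set.ncard_image_le hL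
end

section
/- For every fingerprint f ∈ F with |f| ≥ 2, there exist a fingerprint g ∈ F and a letter α ∉ g such that f = g ∪ {α}. -/
/-- Every fingerprint `f ∈ F` with `|f| ≥ 2` is obtained from some fingerprint
`g ∈ F` by adding one letter `α ∉ g`. -/
theorem fingerprint_eq_insert {α : Type*} [DecidableEq α]
    (s : ℕ → α) (n : ℕ) (f : Finset α) (hf : f ∈ Fings s n) (hcard : 2 ≤ f.card) :
    ∃ g ∈ Fings s n, ∃ a, a ∉ g ∧ f = insert a g := by
  obtain ⟨i, j, hi, hij, hjn, hfij⟩ := hf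
  have hP : ∃ m : ℕ, fingerprint s i (i + m) = f := ⟨j - i, by rwa [Nat.add_sub_cancel' hij]⟩
  classical
  set m0 := Nat.find hP with hm0
  have hspec : fingerprint s i (i + m0) = f := Nat.find_spec hP
  have hm0pos : 0 < m0 := by
    rcases Nat.eq_zero_or_pos m0 with h | h
    · exfalso
      have : fingerprint s i i = f := by rwa [h, Nat.add_zero] at hspec
      have hc : (fingerprint s i i).card ≤ 1 := by
        simp [fingerprint, Finset.Icc_self]
      rw [this] at hc; omega
    · exact h
  have hm0le : m0 ≤ j - i := Nat.find_min' hP (by rwa [Nat.add_sub_cancel' hij])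
  have hicc : Finset.Icc i (i + m0) = insert (i + m0) (Finset.Icc i (i + (m0 - 1))) := by
    rw [← Finset.Ico_insert_right (show i ≤ i + m0 by omega)]
    congr 1
    rw [← Finset.Ico_add_one_right_eq_Icc]
    congr 1
    omega
  have hins : f = insert (s (i + m0)) (fingerprint s i (i + (m0 - 1))) := by
    rw [← hspec, fingerprint, hicc, Finset.image_insert]
    rfl
  refine ⟨fingerprint s i (i + (m0 - 1)), ⟨i, i + (m0 - 1), hi, by omega, by omega, rfl⟩,
    s (i + m0), ?_, hins⟩
  intro hmem
  have : fingerprint s i (i + (m0 - 1)) = f := by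
    rw [hins, Finset.insert_eq_self.mpr hmem]
  exact absurd this (Nat.find_min hP (by omega))
end

section
/- There exists a function assigning to each fingerprint f ∈ F a sequence α_1, …, α_{|f|} of pairwise distinct letters with {α_1,…,α_{|f|}} = f, such that for every 1 ≤ k ≤ |f| the prefix set {α_1,…,α_k} is itself a fingerprint in F. (This is the property that allows the set of fingerprints to be represented as a trie in which each node's fingerprint extends its parent's fingerprint by one letter.) -/
/-!
List the letters of `s_i … s_j` in order of first occurrence (`List.eraseDups` of the window).
A prefix of a deduplicated list is the deduplication of a prefix of the list, so every
nonempty prefix of this ordering has as letter set the fingerprint of some `s_i … s_{j'}`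
with `j' ≤ j`.
-/

namespace List

variable {α : Type*} [DecidableEq α]

theorem eraseDups_append_singleton (l : List α) (x : α) :
    (l ++ [x]).eraseDups = l.eraseDups ++ if x ∈ l then [] else [x] := by
  rw [eraseDups_append]
  by_cases hx : x ∈ l <;> simp [removeAll, hx, eraseDups_cons]

theorem nodup_eraseDups (l : List α) : l.eraseDups.Nodup := by
  induction l using List.reverseRecOn with
  | nil => simp
  | append_singleton l x ih =>
    rw [eraseDups_append_singleton]
    split_ifs with hx
    · simpa using ih
    · exact ih.append (nodup_singleton x) (by simpa using hx)

theorem toFinset_eraseDups (l : List α) : l.eraseDups.toFinset = l.toFinset := by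
  ext; simp

@[simp]
theorem eraseDups_eq_nil_iff {l : List α} : l.eraseDups = [] ↔ l = [] := by
  simp only [eq_nil_iff_forall_not_mem, mem_eraseDups]

theorem exists_take_eraseDups_eq_eraseDups_take (l : List α) (k : ℕ) :
    ∃ m ≤ l.length, l.eraseDups.take k = (l.take m).eraseDups := by
  induction l using List.reverseRecOn with
  | nil => exact ⟨0, le_rfl, by simp⟩
  | append_singleton l x ih =>
    by_cases hk : k ≤ l.eraseDups.length
    · obtain ⟨m, hm, h⟩ := ih
      refine ⟨m, by rw [length_append, length_singleton]; omega, ?_⟩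
      rw [eraseDups_append_singleton, take_append_of_le_length hk, h,
        take_append_of_le_length hm]
    · refine ⟨(l ++ [x]).length, le_rfl, ?_⟩
      rw [take_length]
      apply take_of_length_le
      rw [eraseDups_append_singleton]
      split_ifs <;> simp <;> omega

end List

section

variable {α : Type*} [DecidableEq α]

theorem fingerprint_eq_toFinset_map_range' (s : ℕ → α) (i j : ℕ) :
    fingerprint s i j = ((List.range' i (j + 1 - i)).map s).toFinset := by
  ext a
  simp only [fingerprint, Finset.mem_image, Finset.mem_Icc, List.mem_toFinset, List.mem_map,
    List.mem_range'_1]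
  exact exists_congr fun x => and_congr_left fun _ => by omega

theorem exists_ordering_with_prefixes_mem_fings {s : ℕ → α} {n : ℕ} {f : Finset α}
    (hf : f ∈ Fings s n) :
    ∃ l : List α, l.Nodup ∧ l.toFinset = f ∧
      ∀ k, 1 ≤ k → (l.take k).toFinset ∈ Fings s n := by
  obtain ⟨i, j, hi, hij, hjn, rfl⟩ := hf
  set w := (List.range' i (j + 1 - i)).map s
  have hlen : w.length = j + 1 - i := by simp [w]
  refine ⟨w.eraseDups, w.nodup_eraseDups, ?_, fun k hk => ?_⟩
  · rw [List.toFinset_eraseDups, fingerprint_eq_toFinset_map_range']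
  obtain ⟨m, hm, hprefix⟩ := w.exists_take_eraseDups_eq_eraseDups_take k
  have hm0 : m ≠ 0 := by
    rintro rfl
    rw [List.take_zero, List.eraseDups_nil, List.take_eq_nil_iff, List.eraseDups_eq_nil_iff]
      at hprefix
    exact List.ne_nil_of_length_pos (by omega) (hprefix.resolve_left (by omega))
  refine ⟨i, i + m - 1, hi, by omega, by omega, ?_⟩
  rw [hprefix, List.toFinset_eraseDups, fingerprint_eq_toFinset_map_range', ← List.map_take,
    List.take_range'_of_length_ge (by omega)]
  congr 3
  omega

end

/-- There is a function assigning to each fingerprint `f ∈ F` an ordering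
`α_1, …, α_{|f|}` of its letters (a duplicate-free list whose set of letters is `f`)
such that every nonempty prefix set `{α_1, …, α_k}` is itself a fingerprint in `F`.
This is the property underlying the trie representation of `F`. -/
theorem exists_trie_ordering {α : Type*} [DecidableEq α] (s : ℕ → α) (n : ℕ) :
    ∃ ord : Finset α → List α,
      ∀ f ∈ Fings s n,
        (ord f).Nodup ∧ (ord f).toFinset = f ∧
          ∀ k, 1 ≤ k → k ≤ f.card → ((ord f).take k).toFinset ∈ Fings s n := by
  choose! ord hord using fun f (hf : f ∈ Fings s n) => exists_ordering_with_prefixes_mem_fings hf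
  refine ⟨ord, fun f hf => ?_⟩
  obtain ⟨hnodup, hset, hprefixes⟩ := hord f hf
  exact ⟨hnodup, hset, fun k hk _ => hprefixes k hk⟩
end

section
/- For every maximal location ⟨i,j⟩ of s, the string O_s^{⟨i,j⟩} is a sequence of pairwise distinct letters whose set of letters is exactly C_s(i,j); i.e., O_s^{⟨i,j⟩} is a permutation of the fingerprint C_s(i,j). -/
/-- `fo_s(i,j)`: the string of the first occurrences of each distinct letter
encountered when reading `s_i … s_j` from left to right. -/
def fo {α : Type*} [DecidableEq α] (s : ℕ → α) (i j : ℕ) : List α :=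
  ((List.range' i (j + 1 - i)).filter
    (fun p => decide (∀ q ∈ Finset.Ico i p, s q ≠ s p))).map s

/-- `Support([i,j])`: the minimum over letters `a ∈ C_s(i,j)` of the position of
the rightmost occurrence of `a` in `s_i … s_j`. -/
noncomputable def support {α : Type*} [DecidableEq α] (s : ℕ → α) (i j : ℕ) : ℕ :=
  sInf {q | ∃ a ∈ fingerprint s i j, q = sSup {p | i ≤ p ∧ p ≤ j ∧ s p = a}}

/-- `O_s^{[i,j]} = fo_s(Support([i,j]), j)`. -/
noncomputable def Ostr {α : Type*} [DecidableEq α] (s : ℕ → α) (i j : ℕ) : List α :=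
  fo s (support s i j) j

/-- The substring `s_i … s_j` as a list. -/
def substr {α : Type*} (s : ℕ → α) (i j : ℕ) : List α :=
  (List.range' i (j + 1 - i)).map s

/-- The position of the next occurrence of `s_i` after position `i`, within the
extended sequence `s_1 … s_{n+1}`, and `n + 2` if there is none. -/
noncomputable def nxt {α : Type*} (s : ℕ → α) (n i : ℕ) : ℕ :=
  sInf ({j | i < j ∧ j ≤ n + 1 ∧ s j = s i} ∪ {n + 2})

/-- `lfo_s(i) = fo_s(i, j − 1)` where `j` is the minimal position with `i < j` and
`s_j = s_i` if it exists and `j = n + 2` otherwise, computed in the sequence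
extended by the sentinel `s_{n+1} = #`. -/
noncomputable def lfo {α : Type*} [DecidableEq α] (s : ℕ → α) (n i : ℕ) : List α :=
  fo s i (nxt s n i - 1)

/-!
Every letter of `C_s(i,j)` occurs last at a position `≥ Support([i,j])`, and `Support([i,j])`
is itself such a last occurrence, so the window `[Support([i,j]), j]` has the same fingerprint
as `[i,j]`. On any window, `fo` keeps exactly the first occurrence of each letter, hence lists
the letters of that window's fingerprint, each once.
-/

section FirstOccurrences

variable {α : Type*} [DecidableEq α] (s : ℕ → α)

theorem fo_nodup (a j : ℕ) : (fo s a j).Nodup := by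
  refine List.Nodup.map_on ?_ ((List.nodup_range' (h := Nat.one_pos)).filter _)
  intro p hp q hq hpq
  simp only [List.mem_filter, List.mem_range'_1, decide_eq_true_eq, Finset.mem_Ico] at hp hq
  by_contra hne
  rcases Nat.lt_or_gt_of_ne hne with hlt | hlt
  · exact hq.2 p ⟨hp.1.1, hlt⟩ hpq
  · exact hp.2 q ⟨hq.1.1, hlt⟩ hpq.symm

theorem fo_toFinset (a j : ℕ) : (fo s a j).toFinset = fingerprint s a j := by
  ext b
  simp only [fo, fingerprint, List.mem_toFinset, List.mem_map, List.mem_filter,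
    List.mem_range'_1, decide_eq_true_eq, Finset.mem_image, Finset.mem_Icc, Finset.mem_Ico]
  constructor
  · rintro ⟨p, ⟨⟨hap, hpj⟩, -⟩, rfl⟩
    exact ⟨p, ⟨hap, by omega⟩, rfl⟩
  · rintro ⟨p, ⟨hap, hpj⟩, rfl⟩
    have hex : ∃ q, a ≤ q ∧ q ≤ j ∧ s q = s p := ⟨p, hap, hpj, rfl⟩
    obtain ⟨haq, hqj, hq⟩ := Nat.find_spec hex
    refine ⟨Nat.find hex, ⟨⟨haq, by omega⟩, fun r ⟨har, hrq⟩ hr => ?_⟩, hq⟩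
    exact Nat.find_min hex hrq ⟨har, by omega, hr.trans hq⟩

end FirstOccurrences

section Support

variable {α : Type*} (s : ℕ → α)

noncomputable def lastOcc (i j : ℕ) (b : α) : ℕ :=
  sSup {p | i ≤ p ∧ p ≤ j ∧ s p = b}

variable [DecidableEq α] {i j : ℕ}

theorem fingerprint_subset_of_le {a : ℕ} (hia : i ≤ a) :
    fingerprint s a j ⊆ fingerprint s i j :=
  Finset.image_subset_image (Finset.Icc_subset_Icc_left hia)

theorem support_eq_sInf_lastOcc :
    support s i j = sInf {q | ∃ b ∈ fingerprint s i j, q = lastOcc s i j b} :=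
  rfl

theorem lastOcc_spec {b : α} (hb : b ∈ fingerprint s i j) :
    i ≤ lastOcc s i j b ∧ lastOcc s i j b ≤ j ∧ s (lastOcc s i j b) = b := by
  obtain ⟨k, hk, rfl⟩ := Finset.mem_image.mp hb
  rw [Finset.mem_Icc] at hk
  exact Nat.sSup_mem (s := {p | i ≤ p ∧ p ≤ j ∧ s p = s k}) ⟨k, hk.1, hk.2, rfl⟩
    ⟨j, fun p hp => hp.2.1⟩

theorem support_le_lastOcc {b : α} (hb : b ∈ fingerprint s i j) :
    support s i j ≤ lastOcc s i j b :=
  Nat.sInf_le ⟨b, hb, rfl⟩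

theorem le_support (hij : i ≤ j) : i ≤ support s i j := by
  have hsi : s i ∈ fingerprint s i j :=
    Finset.mem_image_of_mem s (Finset.mem_Icc.mpr ⟨le_rfl, hij⟩)
  rw [support_eq_sInf_lastOcc]
  obtain ⟨b, hb, hsupp⟩ := Nat.sInf_mem (⟨_, s i, hsi, rfl⟩ :
    {q | ∃ b ∈ fingerprint s i j, q = lastOcc s i j b}.Nonempty)
  exact hsupp ▸ (lastOcc_spec s hb).1

theorem fingerprint_support (hij : i ≤ j) :
    fingerprint s (support s i j) j = fingerprint s i j := by
  refine (fingerprint_subset_of_le s (le_support s hij)).antisymm fun b hb => ?_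
  obtain ⟨-, hpj, hpb⟩ := lastOcc_spec s hb
  exact Finset.mem_image.mpr ⟨_, Finset.mem_Icc.mpr ⟨support_le_lastOcc s hb, hpj⟩, hpb⟩

end Support

/-- For every maximal location `⟨i,j⟩`, the string `O_s^{⟨i,j⟩}` is a sequence of
pairwise distinct letters whose set of letters is exactly `C_s(i,j)`, i.e. it is a
permutation of the fingerprint `C_s(i,j)`. -/
theorem Ostr_nodup_toFinset_eq {α : Type*} [DecidableEq α]
    (s : ℕ → α) (n i j : ℕ) (h : IsMaxLoc s n i j) :
    (Ostr s i j).Nodup ∧ (Ostr s i j).toFinset = fingerprint s i j :=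
  ⟨fo_nodup s _ _, by rw [Ostr, fo_toFinset, fingerprint_support s h.2.1]⟩
end

section
/- For every maximal location ⟨i,j⟩ of s, the string O_s^{⟨i,j⟩} is a proper prefix of lfo_s(Support(⟨i,j⟩)). -/
/-! The support `k` of `⟨i,j⟩` is the last occurrence of `s_k` in `s_i … s_j`, and by maximality
(or the sentinel when `j = n`) the letter `s_{j+1}` does not occur in `s_k … s_j` either. Hence the
next occurrence of `s_k` lies beyond `j + 1`, so `lfo_s(k)` reads `s_k … s_{j+1}` at least, and
the fresh letter `s_{j+1}` extends `fo_s(k, j)` strictly. -/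

lemma support_spec {α : Type*} [DecidableEq α] (s : ℕ → α) {i j : ℕ} (hij : i ≤ j) :
    i ≤ support s i j ∧ support s i j ≤ j ∧
      ∀ p, support s i j < p → p ≤ j → s p ≠ s (support s i j) := by
  have hne : {q | ∃ a ∈ fingerprint s i j, q = sSup {p | i ≤ p ∧ p ≤ j ∧ s p = a}}.Nonempty :=
    ⟨_, s i, Finset.mem_image.2 ⟨i, Finset.mem_Icc.2 ⟨le_rfl, hij⟩, rfl⟩, rfl⟩
  obtain ⟨a, ha, hsup⟩ := Nat.sInf_mem hne
  obtain ⟨p₀, hp₀, rfl⟩ := Finset.mem_image.1 ha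
  rw [Finset.mem_Icc] at hp₀
  have hbdd : BddAbove {p | i ≤ p ∧ p ≤ j ∧ s p = s p₀} := ⟨j, fun p hp => hp.2.1⟩
  have hmem : sSup {p | i ≤ p ∧ p ≤ j ∧ s p = s p₀} ∈ {p | i ≤ p ∧ p ≤ j ∧ s p = s p₀} :=
    Nat.sSup_mem ⟨p₀, hp₀.1, hp₀.2, rfl⟩ hbdd
  change support s i j = _ at hsup
  rw [← hsup] at hmem
  refine ⟨hmem.1, hmem.2.1, fun p hkp hpj hsp => ?_⟩
  have hle := le_csSup hbdd ⟨hmem.1.trans hkp.le, hpj, hsp.trans hmem.2.2⟩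
  rw [← hsup] at hle
  omega

lemma IsMaxLoc.forall_ne_succ {α : Type*} [DecidableEq α] {s : ℕ → α} {n i j : ℕ}
    (hsent : ∀ p, 1 ≤ p → p ≤ n → s p ≠ s (n + 1)) (h : IsMaxLoc s n i j) :
    ∀ q, i ≤ q → q ≤ j → s q ≠ s (j + 1) := by
  obtain ⟨hi, -, hjn, -, hright⟩ := h
  intro q hiq hqj hq
  rcases hjn.lt_or_eq with hjn | rfl
  · exact hright hjn (Finset.mem_image.2 ⟨q, Finset.mem_Icc.2 ⟨hiq, hqj⟩, hq⟩)
  · exact hsent q (hi.trans hiq) hqj hq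

lemma lt_nxt_of_forall_ne {α : Type*} {s : ℕ → α} {n i b : ℕ} (hb : b ≤ n + 1)
    (h : ∀ p, i < p → p ≤ b → s p ≠ s i) : b < nxt s n i := by
  refine lt_of_lt_of_le (Nat.lt_succ_self b) (le_csInf ⟨n + 2, Or.inr rfl⟩ ?_)
  rintro p (⟨hip, -, hp⟩ | rfl)
  · by_contra! hpb
    exact h p hip (Nat.lt_succ_iff.1 hpb) hp
  · omega

lemma fo_append {α : Type*} [DecidableEq α] (s : ℕ → α) {i j₁ j₂ : ℕ}
    (h₁ : i ≤ j₁ + 1) (h₂ : j₁ ≤ j₂) :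
    fo s i j₂ = fo s i j₁ ++
      ((List.range' (j₁ + 1) (j₂ - j₁)).filter
        (fun p => decide (∀ q ∈ Finset.Ico i p, s q ≠ s p))).map s := by
  have hrange : List.range' i (j₁ + 1 - i) ++ List.range' (j₁ + 1) (j₂ - j₁)
      = List.range' i (j₂ + 1 - i) := by
    have := List.range'_append_1 (s := i) (m := j₁ + 1 - i) (n := j₂ - j₁)
    rwa [Nat.add_sub_cancel' h₁, show j₁ + 1 - i + (j₂ - j₁) = j₂ + 1 - i by omega] at this
  rw [fo, fo, ← List.map_append, ← List.filter_append, hrange]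

lemma fo_proper_prefix {α : Type*} [DecidableEq α] (s : ℕ → α) {i j₁ j₂ : ℕ}
    (h₁ : i ≤ j₁ + 1) (h₂ : j₁ < j₂) (hnew : ∀ q, i ≤ q → q ≤ j₁ → s q ≠ s (j₁ + 1)) :
    fo s i j₁ <+: fo s i j₂ ∧ fo s i j₁ ≠ fo s i j₂ := by
  rw [fo_append s h₁ h₂.le]
  refine ⟨List.prefix_append _ _, fun heq => ?_⟩
  have hmem : s (j₁ + 1) ∈ ((List.range' (j₁ + 1) (j₂ - j₁)).filter
      (fun p => decide (∀ q ∈ Finset.Ico i p, s q ≠ s p))).map s := by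
    refine List.mem_map_of_mem (List.mem_filter.2 ⟨List.mem_range'_1.2 ⟨le_rfl, by omega⟩, ?_⟩)
    simpa [Finset.mem_Ico, Nat.lt_succ_iff] using hnew
  rw [List.append_right_eq_self.mp heq.symm] at hmem
  exact List.not_mem_nil hmem

/-- For every maximal location `⟨i,j⟩` of `s = s_1 … s_n` (extended by a sentinel
letter `s_{n+1}` not occurring in `s_1 … s_n`), the string `O_s^{⟨i,j⟩}` is a
proper prefix of `lfo_s(Support(⟨i,j⟩))`. -/
theorem Ostr_proper_prefix_lfo {α : Type*} [DecidableEq α]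
    (s : ℕ → α) (n i j : ℕ)
    (hsent : ∀ p, 1 ≤ p → p ≤ n → s p ≠ s (n + 1))
    (h : IsMaxLoc s n i j) :
    Ostr s i j <+: lfo s n (support s i j) ∧ Ostr s i j ≠ lfo s n (support s i j) := by
  obtain ⟨hik, hkj, hlast⟩ := support_spec s h.2.1
  have hfresh : ∀ q, support s i j ≤ q → q ≤ j → s q ≠ s (j + 1) := fun q hkq hqj =>
    h.forall_ne_succ hsent q (hik.trans hkq) hqj
  have hnxt : j + 1 < nxt s n (support s i j) := by
    refine lt_nxt_of_forall_ne (by have := h.2.2.1; omega) fun p hkp hpj => ?_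
    rcases hpj.lt_or_eq with hpj | rfl
    · exact hlast p hkp (Nat.lt_succ_iff.1 hpj)
    · exact (hfresh _ le_rfl hkj).symm
  exact fo_proper_prefix s (by omega) (by omega) hfresh
end

section
/- For every position m with 1 ≤ m ≤ n and every nonempty proper prefix u of lfo_s(m), there exists a maximal location ⟨k,l⟩ of s such that Support(⟨k,l⟩) = m and O_s^{⟨k,l⟩} = u. -/
/-!
Let `J + 1` be the next occurrence of `s m`, so that `lfo s n m = fo s m J`. Reading
`s_m … s_J` letter by letter, `fo s m ·` grows by one letter exactly at each new letter,
so a nonempty proper prefix `u` equals `fo s m l` for an `l < J` with `s (l + 1)` new.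
Extending `[m, l]` to the left as long as the letter to the left already occurs in
`s_m … s_l` gives a maximal location `⟨k, l⟩` with the same fingerprint. Every letter of
it occurs in `[m, l]`, while `s m` does not occur in `(m, l]`, so its support is `m`.
-/

section Fingerprint

variable {α : Type*} [DecidableEq α] (s : ℕ → α)

@[simp]
theorem mem_fingerprint_s9 {i j : ℕ} {a : α} :
    a ∈ fingerprint s i j ↔ ∃ q, i ≤ q ∧ q ≤ j ∧ s q = a := by
  simp [fingerprint, and_assoc]

theorem fingerprint_eq_insert_left {i j : ℕ} (h : i ≤ j) :
    fingerprint s i j = insert (s i) (fingerprint s (i + 1) j) := by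
  rw [fingerprint, fingerprint, ← Finset.image_insert, Finset.insert_Icc_add_one_left_eq_Icc h]

theorem exists_left_maximal_fingerprint_eq {m l : ℕ} (hm : 1 ≤ m) (hml : m ≤ l) :
    ∃ k, 1 ≤ k ∧ k ≤ m ∧ fingerprint s k l = fingerprint s m l ∧
      (1 < k → s (k - 1) ∉ fingerprint s m l) := by
  induction m, hm using Nat.le_induction with
  | base => exact ⟨1, le_rfl, le_rfl, rfl, by omega⟩
  | succ m hm ih =>
    by_cases hprev : s m ∈ fingerprint s (m + 1) l
    · have hC : fingerprint s m l = fingerprint s (m + 1) l := by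
        rw [fingerprint_eq_insert_left s (by omega), Finset.insert_eq_of_mem hprev]
      obtain ⟨k, hk1, hkm, hCk, hleft⟩ := ih (by omega)
      exact ⟨k, hk1, by omega, hCk.trans hC, hC ▸ hleft⟩
    · exact ⟨m + 1, by omega, le_rfl, rfl, fun _ => hprev⟩

end Fingerprint

section FirstOccurrences

variable {α : Type*} [DecidableEq α] (s : ℕ → α)

theorem length_fo_le (i j : ℕ) : (fo s i j).length ≤ j + 1 - i := by
  rw [fo, List.length_map]
  exact (List.length_filter_le _ _).trans (List.length_range' ..).le

theorem le_of_fo_ne_nil {i j : ℕ} (h : fo s i j ≠ []) : i ≤ j := by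
  have := length_fo_le s i j
  have := List.length_pos_iff.mpr h
  omega

theorem fo_add_one_right {i j : ℕ} (h : i ≤ j + 1) :
    fo s i (j + 1) = fo s i j ++ if s (j + 1) ∈ fingerprint s i j then [] else [s (j + 1)] := by
  have hrange : List.range' i (j + 1 + 1 - i) = List.range' i (j + 1 - i) ++ [j + 1] := by
    rw [show j + 1 + 1 - i = j + 1 - i + 1 by omega, List.range'_concat]
    congr 2
    omega
  have hnew : (∀ q ∈ Finset.Ico i (j + 1), s q ≠ s (j + 1)) ↔ s (j + 1) ∉ fingerprint s i j := by
    simp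
  rw [fo, fo, hrange, List.filter_append, List.map_append, List.filter_singleton]
  simp only [hnew]
  split_ifs with hmem <;> simp [hmem]

theorem exists_fo_eq_of_prefix {i j : ℕ} {u : List α} (hne : u ≠ []) (hpre : u <+: fo s i j)
    (hproper : u ≠ fo s i j) :
    ∃ l, i ≤ l ∧ l < j ∧ fo s i l = u ∧ s (l + 1) ∉ fingerprint s i l := by
  induction j generalizing u with
  | zero =>
    have := hpre.length_le
    have := length_fo_le s i 0
    have := List.length_pos_iff.mpr hne
    have : u.length ≠ (fo s i 0).length := fun h => hproper (hpre.eq_of_length h)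
    omega
  | succ j ih =>
    have hij : i ≤ j + 1 := le_of_fo_ne_nil s fun h => hne (List.prefix_nil.mp (h ▸ hpre))
    rw [fo_add_one_right s hij] at hpre hproper
    by_cases hmem : s (j + 1) ∈ fingerprint s i j
    · simp only [hmem, if_true, List.append_nil] at hpre hproper
      obtain ⟨l, hil, hlj, hfo, hnew⟩ := ih hne hpre hproper
      exact ⟨l, hil, by omega, hfo, hnew⟩
    · simp only [hmem, if_false] at hpre hproper
      rcases List.prefix_concat_iff.mp hpre with h | hpre'
      · exact absurd h hproper
      by_cases hlast : u = fo s i j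
      · exact ⟨j, le_of_fo_ne_nil s (hlast ▸ hne), by omega, hlast.symm, hmem⟩
      · obtain ⟨l, hil, hlj, hfo, hnew⟩ := ih hne hpre' hlast
        exact ⟨l, hil, by omega, hfo, hnew⟩

end FirstOccurrences

section Support

variable {α : Type*} (s : ℕ → α)

theorem le_sSup_occurrences {i j q : ℕ} {a : α} (hq : i ≤ q ∧ q ≤ j ∧ s q = a) :
    q ≤ sSup {p | i ≤ p ∧ p ≤ j ∧ s p = a} :=
  le_csSup ⟨j, fun _ hp => hp.2.1⟩ hq

theorem support_eq_of_fingerprint_subset [DecidableEq α] {i j m : ℕ} (him : i ≤ m) (hmj : m ≤ j)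
    (hlast : s m ∉ fingerprint s (m + 1) j) (hsub : fingerprint s i j ⊆ fingerprint s m j) :
    support s i j = m := by
  have hlast_eq : sSup {p | i ≤ p ∧ p ≤ j ∧ s p = s m} = m := by
    refine le_antisymm (csSup_le ⟨m, him, hmj, rfl⟩ fun q hq => ?_)
      (le_sSup_occurrences s ⟨him, hmj, rfl⟩)
    by_contra! hmq
    exact hlast ((mem_fingerprint_s9 s).mpr ⟨q, hmq, hq.2⟩)
  have hm_mem : m ∈ {q | ∃ a ∈ fingerprint s i j, q = sSup {p | i ≤ p ∧ p ≤ j ∧ s p = a}} :=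
    ⟨s m, (mem_fingerprint_s9 s).mpr ⟨m, him, hmj, rfl⟩, hlast_eq.symm⟩
  refine le_antisymm (Nat.sInf_le hm_mem) (le_csInf ⟨m, hm_mem⟩ ?_)
  rintro _ ⟨a, ha, rfl⟩
  obtain ⟨q, hmq, hqj, rfl⟩ := (mem_fingerprint_s9 s).mp (hsub ha)
  exact hmq.trans (le_sSup_occurrences s ⟨him.trans hmq, hqj, rfl⟩)

end Support

section NextOccurrence

variable {α : Type*} (s : ℕ → α)

theorem nxt_le (n i : ℕ) : nxt s n i ≤ n + 2 :=
  Nat.sInf_le (Or.inr rfl)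

theorem ne_of_lt_nxt {n i q : ℕ} (hiq : i < q) (hq : q < nxt s n i) : s q ≠ s i := by
  intro h
  have : nxt s n i ≤ q := Nat.sInf_le (Or.inl ⟨hiq, by have := nxt_le s n i; omega, h⟩)
  omega

end NextOccurrence

theorem exists_maxLoc_of_prefix_lfo_general {α : Type*} [DecidableEq α]
    (s : ℕ → α) (n m : ℕ) (hm1 : 1 ≤ m)
    (u : List α) (hne : u ≠ []) (hpre : u <+: lfo s n m) (hproper : u ≠ lfo s n m) :
    ∃ k l, IsMaxLoc s n k l ∧ support s k l = m ∧ Ostr s k l = u := by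
  obtain ⟨l, hml, hl, hfo, hnew⟩ := exists_fo_eq_of_prefix s hne hpre hproper
  have hl_nxt : l + 1 < nxt s n m := by omega
  obtain ⟨k, hk1, hkm, hCk, hleft⟩ := exists_left_maximal_fingerprint_eq s hm1 hml
  have hsm : s m ∉ fingerprint s (m + 1) l := by
    rw [mem_fingerprint_s9]
    rintro ⟨q, hmq, hql, hq⟩
    exact ne_of_lt_nxt s (n := n) (by omega) (by omega) hq
  have hsupp : support s k l = m :=
    support_eq_of_fingerprint_subset s hkm hml hsm hCk.le
  have hln : l ≤ n := by have := nxt_le s n m; omega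
  refine ⟨k, l, ⟨hk1, hkm.trans hml, hln, fun h => hCk ▸ hleft h, fun _ => hCk ▸ hnew⟩,
    hsupp, ?_⟩
  rw [Ostr, hsupp, hfo]

/-- For every position `m` with `1 ≤ m ≤ n` and every nonempty proper prefix `u` of
`lfo_s(m)` (computed with a sentinel letter `s_{n+1}` not occurring in `s_1 … s_n`),
there exists a maximal location `⟨k,l⟩` of `s` with `Support(⟨k,l⟩) = m` and
`O_s^{⟨k,l⟩} = u`. -/
theorem exists_maxLoc_of_prefix_lfo {α : Type*} [DecidableEq α]
    (s : ℕ → α) (n m : ℕ) (hm1 : 1 ≤ m) (hmn : m ≤ n)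
    (hsent : ∀ p, 1 ≤ p → p ≤ n → s p ≠ s (n + 1))
    (u : List α) (hne : u ≠ []) (hpre : u <+: lfo s n m) (hproper : u ≠ lfo s n m) :
    ∃ k l, IsMaxLoc s n k l ∧ support s k l = m ∧ Ostr s k l = u :=
  exists_maxLoc_of_prefix_lfo_general s n m hm1 u hne hpre hproper
end

section
/- Let σ ≥ 1, let M be a collection of m ≥ 1 pairwise distinct finite subsets of {0,…,σ−1}, and let P be a prime with P ≥ m²σ. Then the number of integers X ∈ [1, P−1] for which the map S ↦ h_X(S) is not injective on M is at most (σ−1)·m(m−1)/2, which is at most (P−1)/2. In particular, a uniformly random X ∈ [1, P−1] makes h_X injective on M with probability at least 1/2. -/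
/-! A bad `X` is a root of `∑_{e ∈ S} X ^ e - ∑_{e ∈ T} X ^ e` for some pair `S ≠ T` in `M`; this
polynomial is nonzero of degree `< σ`, so each of the `m.choose 2` pairs contributes at most
`σ - 1` bad values. -/

open Polynomial Finset

namespace Polynomial

section SumXPow

variable {R : Type*} [Semiring R]

noncomputable def sumXPow (S : Finset ℕ) : R[X] := ∑ e ∈ S, X ^ e

theorem coeff_sumXPow (S : Finset ℕ) (k : ℕ) :
    (sumXPow S : R[X]).coeff k = if k ∈ S then 1 else 0 := by
  simp [sumXPow, finsetSum_coeff, coeff_X_pow]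

theorem sumXPow_injective [Nontrivial R] : Function.Injective (sumXPow : Finset ℕ → R[X]) := by
  intro S T hST
  ext k
  have hk := congrArg (coeff · k) hST
  simp only [coeff_sumXPow] at hk
  split_ifs at hk <;> simp_all

theorem natDegree_sumXPow_le {S : Finset ℕ} {σ : ℕ} (hS : S ⊆ range σ) :
    (sumXPow S : R[X]).natDegree ≤ σ - 1 :=
  natDegree_sum_le_of_forall_le _ _ fun e he =>
    (natDegree_X_pow_le e).trans (Nat.le_sub_one_of_lt (mem_range.mp (hS he)))

@[simp]
theorem eval_sumXPow {A : Type*} [CommSemiring A] (x : A) (S : Finset ℕ) :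
    (sumXPow S).eval x = ∑ e ∈ S, x ^ e := by
  simp [sumXPow, eval_finsetSum]

end SumXPow

section Roots

variable {R : Type*} [CommRing R] [IsDomain R]

theorem ncard_setOf_isRoot_le {p : R[X]} (hp : p ≠ 0) : {x | p.IsRoot x}.ncard ≤ p.natDegree := by
  classical
  have hroots : {x | p.IsRoot x} = ↑p.roots.toFinset := by ext; simp [mem_roots hp]
  rw [hroots, Set.ncard_coe_finset]
  exact (Multiset.toFinset_card_le _).trans (card_roots' p)

theorem ncard_not_injOn_eval_le {α : Type*} (F : α → R[X]) (M : Finset α) {d : ℕ}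
    (hF : Set.InjOn F M) (hdeg : ∀ S ∈ M, (F S).natDegree ≤ d) :
    {x : R | ¬ Set.InjOn (fun S => (F S).eval x) M}.ncard ≤ d * (#M).choose 2 := by
  classical
  induction M using Finset.induction_on with
  | empty => simp
  | insert a M ha ih =>
    rw [coe_insert] at hF
    have hFM : Set.InjOn F M := hF.mono (Set.subset_insert _ _)
    have hsplit : {x : R | ¬ Set.InjOn (fun S => (F S).eval x) ↑(insert a M)} =
        {x | ¬ Set.InjOn (fun S => (F S).eval x) M} ∪ ⋃ T ∈ M, {x | (F a - F T).IsRoot x} := by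
      ext x
      simp [Set.injOn_insert (mem_coe.not.mpr ha), sub_eq_zero, imp_iff_not_or,
        eq_comm (a := eval x (F a))]
    have hroots : ∀ T ∈ M, {x | (F a - F T).IsRoot x}.ncard ≤ d := fun T hT =>
      (ncard_setOf_isRoot_le (sub_ne_zero.mpr fun h =>
          ha (hF (Set.mem_insert _ _) (Set.mem_insert_of_mem _ hT) h ▸ hT))).trans
        ((natDegree_sub_le _ _).trans
          (max_le (hdeg a (mem_insert_self _ _)) (hdeg T (mem_insert_of_mem hT))))
    calc _ ≤ d * (#M).choose 2 + ∑ T ∈ M, {x | (F a - F T).IsRoot x}.ncard := by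
          rw [hsplit]
          exact (Set.ncard_union_le _ _).trans (add_le_add
            (ih hFM fun S hS => hdeg S (mem_insert_of_mem hS)) (M.set_ncard_biUnion_le _))
      _ ≤ d * (#M).choose 2 + #M * d := by grw [sum_le_card_nsmul M _ d hroots, smul_eq_mul]
      _ = d * (#(insert a M)).choose 2 := by
          rw [card_insert_of_notMem ha, Nat.choose_succ_succ', Nat.choose_one_right]; ring

end Roots

end Polynomial

theorem Nat.sub_one_mul_mul_sub_one_le_sub_one {σ m P : ℕ} (h : m ^ 2 * σ ≤ P) :
    (σ - 1) * (m * (m - 1)) ≤ P - 1 := by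
  rcases σ with _ | σ
  · simp
  rcases m with _ | m
  · simp
  simp only [Nat.add_sub_cancel] at *
  have : σ * ((m + 1) * m) < (m + 1) ^ 2 * (σ + 1) := by nlinarith
  omega

theorem bad_hash_count_le_general {σ m P : ℕ} (hP : P.Prime) (hPge : m ^ 2 * σ ≤ P)
    (M : Finset (Finset ℕ)) (hM : ∀ S ∈ M, S ⊆ Finset.range σ)
    (hcard : M.card = m) :
    {X : ℕ | X ∈ Finset.Icc 1 (P - 1) ∧
        ¬ Set.InjOn (fun S : Finset ℕ => ∑ e ∈ S, (X : ZMod P) ^ e) ↑M}.ncard ≤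
      (σ - 1) * (m * (m - 1)) / 2 ∧
    (σ - 1) * (m * (m - 1)) / 2 ≤ (P - 1) / 2 := by
  have : Fact P.Prime := ⟨hP⟩
  have hcast : Set.InjOn (Nat.cast : ℕ → ZMod P) (Finset.Icc 1 (P - 1)) := by
    intro X hX Y hY hXY
    simp only [coe_Icc, Set.mem_Icc] at hX hY
    rwa [ZMod.natCast_eq_natCast_iff', Nat.mod_eq_of_lt (by omega),
      Nat.mod_eq_of_lt (by omega)] at hXY
  refine ⟨?_, Nat.div_le_div_right (Nat.sub_one_mul_mul_sub_one_le_sub_one hPge)⟩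
  rw [Nat.mul_div_assoc _ (Nat.even_mul_pred_self m).two_dvd, ← Nat.choose_two_right, ← hcard]
  calc
    _ ≤ {x : ZMod P | ¬ Set.InjOn (fun S => (sumXPow S).eval x) M}.ncard :=
      Set.ncard_le_ncard_of_injOn Nat.cast (fun X hX => by simpa using hX.2)
        (hcast.mono fun X hX => hX.1)
    _ ≤ (σ - 1) * (#M).choose 2 :=
      ncard_not_injOn_eval_le _ M sumXPow_injective.injOn
        fun S hS => natDegree_sumXPow_le (hM S hS)

/-- Let `M` be a collection of `m ≥ 1` pairwise distinct finite subsets of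
`{0,…,σ−1}` and `P` a prime with `P ≥ m²σ`. The number of integers
`X ∈ [1, P−1]` for which the polynomial hash `h_X(S) = Σ_{e∈S} X^e` (in `ℤ/Pℤ`)
is not injective on `M` is at most `(σ−1)·m(m−1)/2 ≤ (P−1)/2`; in particular a
uniformly random `X ∈ [1, P−1]` makes `h_X` injective on `M` with probability at
least `1/2`. -/
theorem bad_hash_count_le {σ m P : ℕ} (hσ : 1 ≤ σ) (hm : 1 ≤ m)
    (hP : P.Prime) (hPge : m ^ 2 * σ ≤ P)
    (M : Finset (Finset ℕ)) (hM : ∀ S ∈ M, S ⊆ Finset.range σ)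
    (hcard : M.card = m) :
    {X : ℕ | X ∈ Finset.Icc 1 (P - 1) ∧
        ¬ Set.InjOn (fun S : Finset ℕ => ∑ e ∈ S, (X : ZMod P) ^ e) ↑M}.ncard ≤
      (σ - 1) * (m * (m - 1)) / 2 ∧
    (σ - 1) * (m * (m - 1)) / 2 ≤ (P - 1) / 2 :=
  bad_hash_count_le_general hP hPge M hM hcard
end

section
/- Let n, σ, c ≥ 1 be integers, let M be a collection of m pairwise distinct finite subsets of {0,…,σ−1} with m ≤ nσ, and let P be a prime with P ≥ n^{c+2}·σ³. Then the number of elements X ∈ Z/PZ for which two distinct sets of M receive the same hash value h_X is at most (σ−1)·m(m−1)/2, which is less than P/n^c. In particular, a uniformly random X ∈ [0, P−1] maps all sets of M to pairwise distinct values with probability greater than 1 − n^{−c}. -/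
open Polynomial

private lemma hash_mul_sub_one (m : ℕ) : m * m - m = m * (m - 1) := by
  rcases m with _ | k
  · simp
  · have h : (k+1)*(k+1) = (k+1)*k + (k+1) := by ring
    simp [h, Nat.add_sub_cancel]

private lemma hash_two_dvd (m : ℕ) : 2 ∣ m * (m - 1) := by
  rcases m with _ | k
  · simp
  · simpa [Nat.succ_sub_one, mul_comm] using (Nat.even_mul_succ_self k).two_dvd

/-- Let `M` be a collection of `m ≤ nσ` pairwise distinct finite subsets of
`{0,…,σ−1}` and `P` a prime with `P ≥ n^{c+2}·σ³`. The number of `X ∈ ℤ/Pℤ` for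
which two distinct sets of `M` receive the same hash value
`h_X(S) = Σ_{e∈S} X^e` is at most `(σ−1)·m(m−1)/2 < P/n^c`; in particular a
uniformly random `X` maps all sets of `M` to pairwise distinct values with
probability greater than `1 − n^{−c}`. -/
theorem bad_hash_count_lt {n σ c m P : ℕ} (hn : 1 ≤ n) (hσ : 1 ≤ σ) (hc : 1 ≤ c)
    (hm : m ≤ n * σ) (hP : P.Prime) (hPge : n ^ (c + 2) * σ ^ 3 ≤ P)
    (M : Finset (Finset ℕ)) (hM : ∀ S ∈ M, S ⊆ Finset.range σ)
    (hcard : M.card = m) :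
    {X : ZMod P | ∃ x ∈ M, ∃ y ∈ M, x ≠ y ∧
        ∑ e ∈ x, X ^ e = ∑ e ∈ y, X ^ e}.ncard ≤ (σ - 1) * (m * (m - 1)) / 2 ∧
    (σ - 1) * (m * (m - 1)) / 2 * n ^ c < P := by
  haveI : Fact P.Prime := ⟨hP⟩
  constructor
  · -- counting bad hash values
    obtain ⟨f, hf⟩ := exists_injective_nat (Finset ℕ)
    set polyOf : Finset ℕ → (ZMod P)[X] := fun s => ∑ e ∈ s, Polynomial.X ^ e with hpoly
    have hcoeff : ∀ (s : Finset ℕ) (k : ℕ),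
        (polyOf s).coeff k = if k ∈ s then 1 else 0 := by
      intro s k
      simp [polyOf, Polynomial.finset_sum_coeff, Polynomial.coeff_X_pow]
    have hne : ∀ x y : Finset ℕ, x ≠ y → polyOf x - polyOf y ≠ 0 := by
      intro x y hxy h
      apply hxy
      ext k
      have h1 := congrArg (fun p => Polynomial.coeff p k) h
      simp only [Polynomial.coeff_sub, Polynomial.coeff_zero, sub_eq_zero, hcoeff] at h1
      by_cases h2 : k ∈ x <;> by_cases h3 : k ∈ y <;> simp_all
    have hdeg : ∀ s ∈ M, (polyOf s).natDegree ≤ σ - 1 := by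
      intro s hs
      apply Polynomial.natDegree_sum_le_of_forall_le
      intro e he
      have h1 : e < σ := Finset.mem_range.mp (hM s hs he)
      calc (Polynomial.X ^ e : (ZMod P)[X]).natDegree = e := Polynomial.natDegree_X_pow e
        _ ≤ σ - 1 := by omega
    have hRcard : ∀ x ∈ M, ∀ y ∈ M, x ≠ y →
        ((polyOf x - polyOf y).roots.toFinset).card ≤ σ - 1 := by
      intro x hx y hy hxy
      calc ((polyOf x - polyOf y).roots.toFinset).card
          ≤ Multiset.card (polyOf x - polyOf y).roots := Multiset.toFinset_card_le _
        _ ≤ (polyOf x - polyOf y).natDegree := Polynomial.card_roots' _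
        _ ≤ max (polyOf x).natDegree (polyOf y).natDegree := Polynomial.natDegree_sub_le _ _
        _ ≤ σ - 1 := max_le (hdeg x hx) (hdeg y hy)
    have hmem : ∀ (x y : Finset ℕ) (X : ZMod P), x ≠ y →
        (∑ e ∈ x, X ^ e) = (∑ e ∈ y, X ^ e) →
        X ∈ (polyOf x - polyOf y).roots.toFinset := by
      intro x y X hxy hXeq
      rw [Multiset.mem_toFinset, Polynomial.mem_roots (hne x y hxy)]
      simp [Polynomial.IsRoot, polyOf, Polynomial.eval_finset_sum, hXeq, sub_eq_zero]
    set T : Finset (Finset ℕ × Finset ℕ) :=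
      M.offDiag.filter (fun p => f p.1 < f p.2) with hT
    set F : Finset (ZMod P) :=
      T.biUnion (fun p => (polyOf p.1 - polyOf p.2).roots.toFinset) with hF
    have hsub : {X : ZMod P | ∃ x ∈ M, ∃ y ∈ M, x ≠ y ∧
        ∑ e ∈ x, X ^ e = ∑ e ∈ y, X ^ e} ⊆ ↑F := by
      intro X hX
      obtain ⟨x, hx, y, hy, hxy, hXeq⟩ := hX
      have hfne : f x ≠ f y := fun h => hxy (hf h)
      rcases lt_or_gt_of_ne hfne with h | h
      · refine Finset.mem_coe.2 (Finset.mem_biUnion.2 ⟨(x, y), ?_, hmem x y X hxy hXeq⟩)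
        simp [hT, Finset.mem_filter, Finset.mem_offDiag, hx, hy, hxy, h]
      · refine Finset.mem_coe.2 (Finset.mem_biUnion.2
          ⟨(y, x), ?_, hmem y x X (Ne.symm hxy) hXeq.symm⟩)
        simp [hT, Finset.mem_filter, Finset.mem_offDiag, hx, hy, Ne.symm hxy, h]
    have hncard : {X : ZMod P | ∃ x ∈ M, ∃ y ∈ M, x ≠ y ∧
        ∑ e ∈ x, X ^ e = ∑ e ∈ y, X ^ e}.ncard ≤ F.card := by
      have := Set.ncard_le_ncard hsub F.finite_toSet
      rwa [Set.ncard_coe_finset] at this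
    -- cardinality of T
    have hT' : M.offDiag.filter (fun p => ¬ f p.1 < f p.2)
        = M.offDiag.filter (fun p => f p.2 < f p.1) := by
      ext p
      simp only [Finset.mem_filter, Finset.mem_offDiag, and_congr_right_iff]
      rintro ⟨h1, h2, h3⟩
      have : f p.1 ≠ f p.2 := fun h => h3 (hf h)
      omega
    have hswapcard : (M.offDiag.filter (fun p => f p.2 < f p.1)).card = T.card := by
      apply Finset.card_bij' (fun p _ => p.swap) (fun p _ => p.swap)
      · intro p _; rfl
      · intro p _; rfl
      · intro p hp
        simp only [Finset.mem_filter, Finset.mem_offDiag] at hp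
        rw [hT]
        simp only [Finset.mem_filter, Finset.mem_offDiag, Prod.fst_swap, Prod.snd_swap]
        exact ⟨⟨hp.1.2.1, hp.1.1, hp.1.2.2.symm⟩, hp.2⟩
      · intro p hp
        rw [hT] at hp
        simp only [Finset.mem_filter, Finset.mem_offDiag] at hp
        simp only [Finset.mem_filter, Finset.mem_offDiag, Prod.fst_swap, Prod.snd_swap]
        exact ⟨⟨hp.1.2.1, hp.1.1, hp.1.2.2.symm⟩, hp.2⟩
    have hoff : M.offDiag.card = m * (m - 1) := by
      rw [Finset.offDiag_card, hcard, ← hash_mul_sub_one]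
    have hTcard : T.card = m * (m - 1) / 2 := by
      have h2 := Finset.card_filter_add_card_filter_not
        (s := M.offDiag) (p := fun p => f p.1 < f p.2)
      rw [hT', hswapcard, hoff, ← hT] at h2
      obtain ⟨t, ht⟩ := hash_two_dvd m
      omega
    have hFcard : F.card ≤ m * (m - 1) / 2 * (σ - 1) := by
      calc F.card ≤ ∑ p ∈ T, ((polyOf p.1 - polyOf p.2).roots.toFinset).card :=
            Finset.card_biUnion_le
        _ ≤ ∑ _p ∈ T, (σ - 1) := by
            apply Finset.sum_le_sum
            intro p hp
            rw [hT, Finset.mem_filter, Finset.mem_offDiag] at hp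
            exact hRcard p.1 hp.1.1 p.2 hp.1.2.1 hp.1.2.2
        _ = T.card * (σ - 1) := by rw [Finset.sum_const, smul_eq_mul]
        _ = m * (m - 1) / 2 * (σ - 1) := by rw [hTcard]
    have heq : m * (m - 1) / 2 * (σ - 1) = (σ - 1) * (m * (m - 1)) / 2 := by
      rw [Nat.mul_div_assoc _ (hash_two_dvd m), mul_comm]
    calc {X : ZMod P | ∃ x ∈ M, ∃ y ∈ M, x ≠ y ∧
        ∑ e ∈ x, X ^ e = ∑ e ∈ y, X ^ e}.ncard ≤ F.card := hncard
      _ ≤ m * (m - 1) / 2 * (σ - 1) := hFcard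
      _ = (σ - 1) * (m * (m - 1)) / 2 := heq
  · -- arithmetic bound
    have h1 : (σ - 1) * (m * (m - 1)) / 2 ≤ (σ - 1) * ((n * σ) * (n * σ)) := by
      calc (σ - 1) * (m * (m - 1)) / 2 ≤ (σ - 1) * (m * (m - 1)) := Nat.div_le_self _ _
        _ ≤ (σ - 1) * ((n * σ) * (n * σ)) := by
            apply Nat.mul_le_mul_left
            exact Nat.mul_le_mul hm (le_trans (Nat.sub_le m 1) hm)
    have hpos : 0 < ((n * σ) * (n * σ)) * n ^ c := by positivity
    have h2 : (σ - 1) * ((n * σ) * (n * σ)) * n ^ c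
        < σ * ((n * σ) * (n * σ)) * n ^ c := by
      have hlt : σ - 1 < σ := by omega
      calc (σ - 1) * ((n * σ) * (n * σ)) * n ^ c
          = (σ - 1) * (((n * σ) * (n * σ)) * n ^ c) := by ring
        _ < σ * (((n * σ) * (n * σ)) * n ^ c) := by
            exact Nat.mul_lt_mul_of_lt_of_le hlt le_rfl hpos
        _ = σ * ((n * σ) * (n * σ)) * n ^ c := by ring
    have h3 : σ * ((n * σ) * (n * σ)) * n ^ c = n ^ (c + 2) * σ ^ 3 := by ring
    calc (σ - 1) * (m * (m - 1)) / 2 * n ^ c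
        ≤ (σ - 1) * ((n * σ) * (n * σ)) * n ^ c := Nat.mul_le_mul_right _ h1
      _ < n ^ (c + 2) * σ ^ 3 := by rw [← h3]; exact h2
      _ ≤ P := hPge
end

section
/- For every k ≥ 1, the number of maximal locations of the word w_k is |L| = k(3k³ + 2k² − 9k + 16)/12. -/
/-- The word `w_k` over the alphabet `{1,…,k}` (letter `a_i` encoded as `i`),
defined by `w_1 = a_1` and `w_k = w_{k−1}·(a_1 a_2 … a_k)^k` for `k > 1`. -/
def w : ℕ → List ℕ
  | 0 => []
  | k + 1 => w k ++ (List.replicate (k + 1) (List.range' 1 (k + 1))).flatten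

/-- The word `w_k` viewed as a 1-indexed sequence `s_1 … s_n` with `n = |w_k|`. -/
def wSeq (k : ℕ) : ℕ → ℕ := fun p => (w k).getD (p - 1) 0

/-!
Split `w_k` into blocks: block `J` is `(a_1 … a_J)^J`, at the positions `p` with
`|w_{J-1}| < p ≤ |w_J|`. Since block `J + 1` begins with `a_1 … a_J`, the period-`J` pattern of
block `J` runs on for `J` more letters; so for `p` in block `J` the letters `s_p, …, s_{p+J-1}` are
distinct and `s_{p+J} = s_p`. Hence, for `i ≥ 2`, the maximal locations `⟨i, j⟩` are exactly those
with `i ≤ j ≤ min(n, i - 2 + J)`, where `J` is the block of `i - 1`; and `⟨1, j⟩` is maximal iff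
`j = n` or `s_{j+1}` is the first occurrence of some letter `a_J` with `J ≥ 2`. Summing over `i`
gives `k + ∑_{J<k} J²(J-1) + ∑_{o<k²} min(o, k-1)`, which is the closed form.
-/

open Finset

theorem List.getElem?_flatten_replicate {α : Type*} (l : List α) {c r : ℕ}
    (h : r < c * l.length) : (List.replicate c l).flatten[r]? = l[r % l.length]? := by
  induction c generalizing r with
  | zero => simp at h
  | succ c ih =>
    rw [List.replicate_succ, List.flatten_cons]
    rcases lt_or_ge r l.length with hr | hr
    · rw [List.getElem?_append_left hr, Nat.mod_eq_of_lt hr]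
    · rw [List.getElem?_append_right hr, ih (by rw [Nat.succ_mul] at h; omega),
        ← Nat.mod_eq_sub_mod hr]

theorem two_mul_sum_range_min {j L : ℕ} (h : j ≤ L) :
    2 * ∑ o ∈ range L, min o j + j * (j + 1) = 2 * j * L := by
  induction L, h using Nat.le_induction with
  | base =>
    rw [sum_congr rfl fun o ho => min_eq_left (mem_range.1 ho).le, mul_comm,
      sum_range_id_mul_two]
    cases j with
    | zero => rfl
    | succ j => rw [Nat.add_sub_cancel]; ring
  | succ L hL ih =>
    rw [sum_range_succ, min_eq_right hL]
    linarith

theorem sum_range_succ_sq_mul (m : ℕ) :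
    12 * ∑ j ∈ range m, (j + 1) ^ 2 * j + 2 * m * (m + 1) * (2 * m + 1) =
      3 * m ^ 2 * (m + 1) ^ 2 := by
  induction m with
  | zero => simp
  | succ m ih =>
    rw [sum_range_succ]
    nlinarith [ih]

section MaximalLocations

variable {α : Type*} [DecidableEq α]

theorem notMem_fingerprint {s : ℕ → α} {i j : ℕ} {x : α} :
    x ∉ fingerprint s i j ↔ ∀ q, i ≤ q → q ≤ j → s q ≠ x := by
  simp [fingerprint]

instance (s : ℕ → α) (n i j : ℕ) : Decidable (IsMaxLoc s n i j) := by
  unfold IsMaxLoc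
  infer_instance

theorem mem_filter_isMaxLoc {s : ℕ → α} {n i e : ℕ} :
    e ∈ (range (n + 1)).filter (IsMaxLoc s n i) ↔ IsMaxLoc s n i e :=
  mem_filter.trans (and_iff_right_of_imp fun h => mem_range.2 (Nat.lt_succ_of_le h.2.2.1))

theorem ncard_setOf_isMaxLoc (s : ℕ → α) (n : ℕ) :
    {p : ℕ × ℕ | IsMaxLoc s n p.1 p.2}.ncard =
      #((range (n + 1)).filter (IsMaxLoc s n 1)) +
        ∑ q ∈ range n, #((range (n + 1)).filter (IsMaxLoc s n (q + 2))) := by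
  have hbox : {p : ℕ × ℕ | IsMaxLoc s n p.1 p.2} =
      ↑((range (n + 2) ×ˢ range (n + 1)).filter fun p => IsMaxLoc s n p.1 p.2) := by
    ext ⟨i, e⟩
    simp only [Set.mem_ofPred_eq, coe_filter, mem_product, mem_range]
    refine ⟨fun h => ⟨?_, h⟩, fun h => h.2⟩
    obtain ⟨-, hie, hen, -⟩ := h
    omega
  have hzero : (range (n + 1)).filter (IsMaxLoc s n 0) = ∅ :=
    filter_false_of_mem fun _ _ h => Nat.not_succ_le_zero 0 h.1
  rw [hbox, Set.ncard_coe_finset, card_filter, sum_product, sum_range_succ', sum_range_succ']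
  simp only [← card_filter, hzero, card_empty, zero_add, add_zero, add_comm 1, add_assoc,
    one_add_one_eq_two]
  exact add_comm _ _

end MaximalLocations

theorem length_w_succ (j : ℕ) : (w (j + 1)).length = (w j).length + (j + 1) ^ 2 := by
  simp [w, List.length_flatten, sq]

theorem strictMono_length_w : StrictMono fun j => (w j).length :=
  strictMono_nat_of_lt_succ fun j => by
    show (w j).length < (w (j + 1)).length
    rw [length_w_succ]
    exact lt_add_of_pos_right _ (by positivity)

theorem w_prefix {j k : ℕ} (h : j ≤ k) : w j <+: w k := by
  induction k, h using Nat.le_induction with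
  | base => exact List.prefix_refl _
  | succ k _ ih => exact ih.trans (List.prefix_append _ _)

theorem wSeq_length_w_add_of_lt_sq {j k o : ℕ} (hj : j < k) (ho : o < (j + 1) ^ 2) :
    wSeq k ((w j).length + o + 1) = o % (j + 1) + 1 := by
  obtain ⟨t, ht⟩ := w_prefix hj
  have hlt : (w j).length + o < (w (j + 1)).length := by rw [length_w_succ]; omega
  have hrep : o < (j + 1) * (List.range' 1 (j + 1)).length := by simpa [← sq] using ho
  rw [wSeq, Nat.add_sub_cancel, List.getD_eq_getElem?_getD, ← ht,
    List.getElem?_append_left hlt, w, List.getElem?_append_right (Nat.le_add_right _ o),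
    Nat.add_sub_cancel_left, List.getElem?_flatten_replicate _ hrep, List.length_range',
    List.getElem?_range' (Nat.mod_lt o j.succ_pos), Option.getD_some, one_mul, add_comm]

theorem wSeq_length_w_add {j k o : ℕ} (hj : j < k) (ho : o < (j + 1) ^ 2 + (j + 1))
    (hn : (w j).length + o < (w k).length) :
    wSeq k ((w j).length + o + 1) = o % (j + 1) + 1 := by
  rcases lt_or_ge o ((j + 1) ^ 2) with ho' | ho'
  · exact wSeq_length_w_add_of_lt_sq hj ho'
  obtain ⟨r, rfl⟩ := Nat.exists_eq_add_of_le ho'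
  have hj' : j + 1 < k := by
    by_contra! h
    have := strictMono_length_w.monotone h
    simp only [length_w_succ] at this
    omega
  have hr : r < j + 1 := by omega
  rw [← add_assoc, ← length_w_succ, wSeq_length_w_add_of_lt_sq hj' (by nlinarith), sq,
    Nat.mul_add_mod, Nat.mod_eq_of_lt hr, Nat.mod_eq_of_lt (by omega)]

theorem exists_eq_length_w_add {k p : ℕ} (hp : p < (w k).length) :
    ∃ j < k, ∃ o < (j + 1) ^ 2, p = (w j).length + o := by
  induction k with
  | zero => simp [w] at hp
  | succ k ih =>
    rcases lt_or_ge p (w k).length with h | h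
    · obtain ⟨j, hj, o, ho, rfl⟩ := ih h
      exact ⟨j, by omega, o, ho, rfl⟩
    · rw [length_w_succ] at hp
      exact ⟨k, k.lt_succ_self, p - (w k).length, by omega, by omega⟩

theorem wSeq_add_period {j k p : ℕ} (hj : j < k) (hp : (w j).length < p)
    (hp' : p ≤ (w (j + 1)).length) (hn : p + (j + 1) ≤ (w k).length) :
    wSeq k (p + (j + 1)) = wSeq k p := by
  rw [length_w_succ] at hp'
  obtain ⟨o, rfl⟩ : ∃ o, p = (w j).length + o + 1 := ⟨p - (w j).length - 1, by omega⟩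
  rw [wSeq_length_w_add_of_lt_sq hj (by omega), add_right_comm, add_assoc (w j).length,
    wSeq_length_w_add hj (by omega) (by omega), Nat.add_mod_right]

theorem wSeq_ne {j k a b : ℕ} (ha : (w j).length < a) (hab : a < b) (hb : b ≤ a + j)
    (hn : b ≤ (w k).length) : wSeq k a ≠ wSeq k b := by
  obtain ⟨j', hj', o, ho, hao⟩ := exists_eq_length_w_add (k := k) (p := a - 1) (by omega)
  have hjj' : j ≤ j' := by
    by_contra! h
    have := strictMono_length_w.monotone (Nat.succ_le_of_lt h)
    simp only [length_w_succ] at this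
    omega
  obtain rfl : a = (w j').length + o + 1 := by omega
  obtain ⟨d, rfl⟩ := Nat.exists_eq_add_of_lt hab
  rw [wSeq_length_w_add_of_lt_sq hj' ho, show (w j').length + o + 1 + d + 1 =
      (w j').length + (o + (d + 1)) + 1 by ring, wSeq_length_w_add hj' (by omega) (by omega)]
  intro h
  have hmod : o + (d + 1) ≡ o + 0 [MOD j' + 1] := by
    simpa [Nat.ModEq] using h.symm
  have := Nat.eq_zero_of_dvd_of_lt (Nat.modEq_zero_iff_dvd.1 (hmod.add_left_cancel' o))
    (by omega)
  omega

theorem wSeq_le {j k q : ℕ} (hq : 1 ≤ q) (hqj : q ≤ (w j).length + j)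
    (hn : q ≤ (w k).length) : wSeq k q ≤ j := by
  obtain ⟨j', hj', o, ho, hqo⟩ := exists_eq_length_w_add (k := k) (p := q - 1) (by omega)
  obtain rfl : q = (w j').length + o + 1 := by omega
  rw [wSeq_length_w_add_of_lt_sq hj' ho]
  rcases lt_or_ge j' j with h | h
  · have := Nat.mod_lt o (Nat.add_one_pos j')
    omega
  · have := strictMono_length_w.monotone h
    have := Nat.mod_le o (j' + 1)
    omega

theorem wSeq_length_w_add_self {j k : ℕ} (hj : j < k) :
    wSeq k ((w j).length + j + 1) = j + 1 := by
  rw [wSeq_length_w_add_of_lt_sq hj (by nlinarith), Nat.mod_eq_of_lt j.lt_succ_self]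

theorem length_w_add_lt {j k : ℕ} (h : j < k) : (w j).length + j < (w k).length := by
  have := strictMono_length_w.monotone (Nat.succ_le_of_lt h)
  simp only [length_w_succ] at this
  nlinarith

theorem sum_range_length_w {M : Type*} [AddCommMonoid M] (f : ℕ → M) (k : ℕ) :
    ∑ q ∈ range (w k).length, f q =
      ∑ j ∈ range k, ∑ o ∈ range ((j + 1) ^ 2), f ((w j).length + o) := by
  induction k with
  | zero => simp [w]
  | succ k ih => rw [length_w_succ, sum_range_add, ih, sum_range_succ]

theorem exists_le_wSeq_eq_succ {k e : ℕ} (he : 1 ≤ e) (hn : e < (w k).length)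
    (hfirst : ∀ j, e ≠ (w j).length + j) :
    ∃ q, 1 ≤ q ∧ q ≤ e ∧ wSeq k q = wSeq k (e + 1) := by
  obtain ⟨j, hj, o, ho, rfl⟩ := exists_eq_length_w_add hn
  rcases lt_trichotomy o j with hoj | rfl | hjo
  · obtain ⟨i, rfl⟩ : ∃ i, j = i + 1 := ⟨j - 1, by omega⟩
    have hsq : i + 1 ≤ (i + 1) ^ 2 := by nlinarith
    have hlen := length_w_succ i
    refine ⟨(w (i + 1)).length + o + 1 - (i + 1), by omega, by omega, ?_⟩
    have := wSeq_add_period (p := (w (i + 1)).length + o + 1 - (i + 1)) (by omega : i < k)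
      (by omega) (by omega) (by omega)
    rwa [Nat.sub_add_cancel (by omega), eq_comm] at this
  · exact absurd rfl (hfirst o)
  · refine ⟨(w j).length + o - j, by omega, by omega, ?_⟩
    have := wSeq_add_period (p := (w j).length + o - j) hj (by omega)
      (by rw [length_w_succ]; omega) (by omega)
    rwa [show (w j).length + o - j + (j + 1) = (w j).length + o + 1 by omega, eq_comm] at this

theorem isMaxLoc_wSeq_one_iff {k e : ℕ} (hk : 0 < k) :
    IsMaxLoc (wSeq k) (w k).length 1 e ↔
      e = (w k).length ∨ ∃ j ∈ Ioo 0 k, (w j).length + j = e := by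
  have hpos : 0 < (w k).length := strictMono_length_w hk
  constructor
  · rintro ⟨-, he, hen, -, hright⟩
    rcases hen.lt_or_eq with hen | rfl
    · by_contra! hne
      have hfirst : ∀ j, e ≠ (w j).length + j := by
        intro j hj
        rcases Nat.eq_zero_or_pos j with rfl | hj0
        · simp only [w, List.length_nil, zero_add] at hj
          omega
        rcases lt_or_ge j k with hjk | hjk
        · exact hne.2 j (mem_Ioo.2 ⟨hj0, hjk⟩) hj.symm
        · have := strictMono_length_w.monotone hjk
          omega
      obtain ⟨q, hq, hqe, hsq⟩ := exists_le_wSeq_eq_succ he hen hfirst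
      exact notMem_fingerprint.1 (hright hen) q hq hqe hsq
    · exact Or.inl rfl
  · rintro (rfl | ⟨j, hj, rfl⟩)
    · exact ⟨le_rfl, hpos, le_rfl, by omega, by omega⟩
    · rw [mem_Ioo] at hj
      have hlen := length_w_add_lt hj.2
      refine ⟨le_rfl, by omega, hlen.le, by omega, fun _ => notMem_fingerprint.2 ?_⟩
      intro q hq hqe
      rw [wSeq_length_w_add_self hj.2]
      have := wSeq_le hq hqe (hqe.trans hlen.le)
      omega

theorem isMaxLoc_wSeq_succ_iff {j k p e : ℕ} (hj : j < k) (hp : (w j).length < p)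
    (hp' : p ≤ (w (j + 1)).length) :
    IsMaxLoc (wSeq k) (w k).length (p + 1) e ↔
      p + 1 ≤ e ∧ e ≤ (w k).length ∧ e ≤ p + j := by
  constructor
  · rintro ⟨-, hpe, hen, hleft, -⟩
    refine ⟨hpe, hen, ?_⟩
    by_contra! hlt
    refine notMem_fingerprint.1 (hleft (by omega)) (p + (j + 1)) (by omega) (by omega) ?_
    rw [Nat.add_sub_cancel, wSeq_add_period hj hp hp' (by omega)]
  · rintro ⟨hpe, hen, hej⟩
    refine ⟨by omega, hpe, hen, fun _ => notMem_fingerprint.2 ?_, fun _ => notMem_fingerprint.2 ?_⟩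
    · intro q hq hqe
      rw [Nat.add_sub_cancel]
      exact (wSeq_ne hp (by omega) (by omega) (by omega)).symm
    · intro q hq hqe
      exact wSeq_ne (j := j) (by omega) (by omega) (by omega) (by omega)

theorem card_filter_isMaxLoc_wSeq_one {k : ℕ} (hk : 0 < k) :
    #((range ((w k).length + 1)).filter (IsMaxLoc (wSeq k) (w k).length 1)) = k := by
  have hfib : (range ((w k).length + 1)).filter (IsMaxLoc (wSeq k) (w k).length 1) =
      insert (w k).length ((Ioo 0 k).image fun j => (w j).length + j) := by
    ext e
    rw [mem_filter_isMaxLoc, isMaxLoc_wSeq_one_iff hk, mem_insert, mem_image]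
  have hnotMem : (w k).length ∉ (Ioo 0 k).image fun j => (w j).length + j := by
    simp only [mem_image, mem_Ioo, not_exists, not_and]
    exact fun j ⟨_, hjk⟩ => (length_w_add_lt hjk).ne
  have hinj : StrictMono fun j => (w j).length + j := strictMono_length_w.add strictMono_id
  rw [hfib, card_insert_of_notMem hnotMem, card_image_of_injective _ hinj.injective,
    Nat.card_Ioo]
  omega

theorem card_filter_isMaxLoc_wSeq_succ {j k p : ℕ} (hj : j < k) (hp : (w j).length < p)
    (hp' : p ≤ (w (j + 1)).length) :
    #((range ((w k).length + 1)).filter (IsMaxLoc (wSeq k) (w k).length (p + 1))) =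
      min ((w k).length - p) j := by
  have hpn := hp'.trans (strictMono_length_w.monotone (Nat.succ_le_of_lt hj))
  have hfib : (range ((w k).length + 1)).filter (IsMaxLoc (wSeq k) (w k).length (p + 1)) =
      Icc (p + 1) (min (w k).length (p + j)) := by
    ext e
    rw [mem_filter_isMaxLoc, isMaxLoc_wSeq_succ_iff hj hp hp', mem_Icc]
    omega
  rw [hfib, Nat.card_Icc]
  omega

theorem ncard_setOf_isMaxLoc_wSeq {k : ℕ} (hk : 0 < k) :
    {p : ℕ × ℕ | IsMaxLoc (wSeq k) (w k).length p.1 p.2}.ncard =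
      k + ∑ j ∈ range k, ∑ o ∈ range ((j + 1) ^ 2),
        min ((w k).length - ((w j).length + o + 1)) j := by
  rw [ncard_setOf_isMaxLoc, card_filter_isMaxLoc_wSeq_one hk, sum_range_length_w]
  refine congrArg (k + ·) (sum_congr rfl fun j hj => sum_congr rfl fun o ho => ?_)
  rw [mem_range] at hj ho
  exact card_filter_isMaxLoc_wSeq_succ hj (by omega) (by rw [length_w_succ]; omega)

theorem sum_min_length_w_sub (m : ℕ) :
    ∑ j ∈ range (m + 1), ∑ o ∈ range ((j + 1) ^ 2),
        min ((w (m + 1)).length - ((w j).length + o + 1)) j =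
      ∑ j ∈ range m, (j + 1) ^ 2 * j + ∑ o ∈ range ((m + 1) ^ 2), min o m := by
  rw [sum_range_succ]
  congr 1
  · refine sum_congr rfl fun j hj => ?_
    have hlen := length_w_add_lt (k := m + 1) (show j + 1 < m + 1 by simpa using hj)
    rw [length_w_succ j] at hlen
    rw [sum_congr rfl fun o ho => min_eq_right (by rw [mem_range] at ho; omega), sum_const,
      card_range, smul_eq_mul]
  · rw [length_w_succ, ← sum_range_reflect]
    refine sum_congr rfl fun o ho => ?_
    rw [mem_range] at ho
    congr 1
    omega

/-- For every `k ≥ 1`, the number of maximal locations of `w_k` is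
`|L| = k(3k³ + 2k² − 9k + 16)/12`. -/
theorem card_maxLocs_w (k : ℕ) (hk : 1 ≤ k) :
    {p : ℕ × ℕ | IsMaxLoc (wSeq k) (w k).length p.1 p.2}.ncard =
      k * (3 * k ^ 3 + 2 * k ^ 2 + 16 - 9 * k) / 12 := by
  obtain ⟨m, rfl⟩ := Nat.exists_eq_add_of_le' hk
  rw [ncard_setOf_isMaxLoc_wSeq hk, sum_min_length_w_sub]
  have hcubes := sum_range_succ_sq_mul m
  have htail := two_mul_sum_range_min (j := m) (L := (m + 1) ^ 2) (by nlinarith)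
  have h9 : 9 * (m + 1) ≤ 3 * (m + 1) ^ 3 + 2 * (m + 1) ^ 2 + 16 := by nlinarith
  refine (Nat.div_eq_of_eq_mul_left (by norm_num) ?_).symm
  zify [h9] at hcubes htail ⊢
  linear_combination (-1 : ℤ) * hcubes - 6 * htail
end
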